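/- arXiv:0910.5688 — 4 statements merged into one kernel-verified Lean document; each statement's English description precedes it below -/
import Mathlib

section
/- Let C be a nonempty closed convex subset of the Euclidean plane ℝ² and let t be a nonzero vector with C + t = C. Then C + r·t = C for every real number r. Consequently, if in addition C has nonempty interior and C ≠ ℝ², then C is either a closed half-plane whose boundary line is parallel to t, or a closed strip bounded by two distinct parallel lines each parallel to t. -/
/-!
Let `f : ℝ² → ℝ` be a linear functional with kernel `ℝ t`. For `x ∈ C` the set
`{r | x + r • t ∈ C}` is convex and contains every integer, so it is all of `ℝ`: `C` is a
union of lines parallel to `t`, hence `C = f⁻¹(f C)`. Since `f` is an open quotient map, `f C`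
is a closed interval with nonempty interior other than `ℝ`, i.e. `(-∞, c]`, `[c, ∞)` or
`[a, b]` with `a < b`, and pulling it back along `f` gives the half-plane or the strip.
-/

noncomputable section

abbrev Plane := EuclideanSpace ℝ (Fin 2)

/-- `C` is a closed half-plane whose boundary line is parallel to the direction `d`:
there is a nonzero linear functional `f` vanishing on `d` and a constant `c` with
`C = {x | f x ≤ c}`. -/
def IsClosedHalfPlaneDir (C : Set Plane) (d : Plane) : Prop :=
  ∃ (f : Plane →ₗ[ℝ] ℝ) (c : ℝ), f ≠ 0 ∧ f d = 0 ∧ C = {x | f x ≤ c}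

/-- `C` is a closed strip bounded by two distinct parallel lines, each parallel to the
direction `d`: there is a nonzero linear functional `f` vanishing on `d` and constants
`c₁ < c₂` with `C = {x | c₁ ≤ f x ≤ c₂}`. -/
def IsClosedStripDir (C : Set Plane) (d : Plane) : Prop :=
  ∃ (f : Plane →ₗ[ℝ] ℝ) (c₁ c₂ : ℝ), f ≠ 0 ∧ f d = 0 ∧ c₁ < c₂ ∧
    C = {x | c₁ ≤ f x ∧ f x ≤ c₂}

open Set Topology Module

section Translation

variable {G : Type*} [AddCommGroup G] {C : Set G} {t : G}

lemma add_mem_iff_of_image_add_eq (h : (fun x ↦ x + t) '' C = C) (x : G) :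
    x + t ∈ C ↔ x ∈ C := by
  rw [image_add_right] at h
  simpa using (Set.ext_iff.mp h (x + t)).symm

lemma add_zsmul_mem_iff_of_image_add_eq (h : (fun x ↦ x + t) '' C = C) (x : G) (n : ℤ) :
    x + n • t ∈ C ↔ x ∈ C := by
  induction n using Int.induction_on with
  | zero => simp
  | succ n ih => rw [add_zsmul, one_zsmul, ← add_assoc, add_mem_iff_of_image_add_eq h, ih]
  | pred n ih =>
    rw [← ih, ← add_mem_iff_of_image_add_eq h]
    congr! 1
    rw [sub_zsmul, one_zsmul]
    abel

end Translation

section Convex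

variable {E : Type*} [AddCommGroup E] [Module ℝ E] {C : Set E} {t : E}

lemma Convex.add_smul_mem_iff_of_image_add_eq (hC : Convex ℝ C)
    (h : (fun x ↦ x + t) '' C = C) (x : E) (r : ℝ) : x + r • t ∈ C ↔ x ∈ C := by
  suffices ∀ y ∈ C, ∀ s : ℝ, y + s • t ∈ C from
    ⟨fun hx ↦ by simpa using this _ hx (-r), fun hx ↦ this x hx r⟩
  intro y hy s
  have hline : {s : ℝ | y + s • t ∈ C} = AffineMap.lineMap y (y + t) ⁻¹' C := by
    ext s
    simp [AffineMap.lineMap_apply_module', add_comm]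
  have hint (n : ℤ) : y + (n : ℝ) • t ∈ C := by
    rw [Int.cast_smul_eq_zsmul]
    exact (add_zsmul_mem_iff_of_image_add_eq h y n).2 hy
  exact (hline ▸ hC.affine_preimage _).ordConnected.out (hint ⌊s⌋) (hint (⌊s⌋ + 1))
    ⟨Int.floor_le s, by push_cast; exact (Int.lt_floor_add_one s).le⟩

theorem Convex.image_add_smul_eq_of_image_add_eq (hC : Convex ℝ C)
    (h : (fun x ↦ x + t) '' C = C) (r : ℝ) : (fun x ↦ x + r • t) '' C = C := by
  ext x
  rw [image_add_right, mem_preimage, ← neg_smul, hC.add_smul_mem_iff_of_image_add_eq h]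

lemma preimage_image_eq_of_ker_le_span {F : Type*} [AddCommGroup F] [Module ℝ F]
    (f : E →ₗ[ℝ] F) (hker : LinearMap.ker f ≤ ℝ ∙ t)
    (hC : ∀ x, ∀ r : ℝ, x + r • t ∈ C ↔ x ∈ C) : f ⁻¹' (f '' C) = C := by
  refine (subset_preimage_image f C).antisymm' ?_
  rintro x ⟨y, hy, hfy⟩
  obtain ⟨r, hr⟩ := Submodule.mem_span_singleton.mp
    (hker (by simp [hfy] : x - y ∈ LinearMap.ker f))
  rw [show x = y + r • t by rw [hr]; abel]
  exact (hC y r).2 hy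

end Convex

lemma exists_surjective_linearMap_ker_eq_span {K V : Type*} [Field K] [AddCommGroup V]
    [Module K V] [FiniteDimensional K V] (hV : finrank K V = 2) {t : V} (ht : t ≠ 0) :
    ∃ f : V →ₗ[K] K, Function.Surjective f ∧ LinearMap.ker f = K ∙ t := by
  have hrank : finrank K (V ⧸ K ∙ t) = finrank K K := by
    have := (K ∙ t).finrank_quotient_add_finrank
    rw [finrank_span_singleton ht, hV] at this
    rw [finrank_self]
    omega
  let e := LinearEquiv.ofFinrankEq _ _ hrank
  refine ⟨e.toLinearMap ∘ₗ (K ∙ t).mkQ, e.surjective.comp (K ∙ t).mkQ_surjective, ?_⟩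
  rw [LinearEquiv.ker_comp, Submodule.ker_mkQ]

theorem Set.OrdConnected.eq_Iic_or_eq_Ici_or_eq_Icc {α : Type*}
    [ConditionallyCompleteLinearOrder α] [TopologicalSpace α] [OrderTopology α]
    [DenselyOrdered α] [NoMinOrder α] [NoMaxOrder α] {J : Set α} (hJc : J.OrdConnected)
    (hJ : IsClosed J) (hint : (interior J).Nonempty) (hJu : J ≠ univ) :
    (∃ c, J = Iic c) ∨ (∃ c, J = Ici c) ∨ ∃ a b, a < b ∧ J = Icc a b := by
  have hne : J.Nonempty := hint.mono interior_subset
  by_cases ha : BddAbove J <;> by_cases hb : BddBelow J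
  · have heq : J = Icc (sInf J) (sSup J) := (subset_Icc_csInf_csSup hb ha).antisymm
      (hJc.out (hJ.csInf_mem hne hb) (hJ.csSup_mem hne ha))
    rw [heq, interior_Icc] at hint
    exact .inr (.inr ⟨_, _, nonempty_Ioo.mp hint, heq⟩)
  · refine .inl ⟨sSup J, Subset.antisymm (fun x hx ↦ le_csSup ha hx) fun z hz ↦ ?_⟩
    obtain ⟨y, hy, hyz⟩ := not_bddBelow_iff.mp hb z
    exact hJc.out hy (hJ.csSup_mem hne ha) ⟨hyz.le, hz⟩
  · refine .inr (.inl ⟨sInf J, Subset.antisymm (fun x hx ↦ csInf_le hb hx) fun z hz ↦ ?_⟩)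
    obtain ⟨y, hy, hzy⟩ := not_bddAbove_iff.mp ha z
    exact hJc.out (hJ.csInf_mem hne hb) hy ⟨hz, hzy.le⟩
  · exact absurd (hJc.isPreconnected.eq_univ_of_unbounded hb ha) hJu

theorem translation_invariant_closed_convex_general (C : Set Plane)
    (hcl : IsClosed C) (hconv : Convex ℝ C) (t : Plane) (ht : t ≠ 0)
    (htrans : (fun x => x + t) '' C = C) :
    (∀ r : ℝ, (fun x => x + r • t) '' C = C) ∧
    ((interior C).Nonempty → C ≠ Set.univ →
      IsClosedHalfPlaneDir C t ∨ IsClosedStripDir C t) := by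
  refine ⟨hconv.image_add_smul_eq_of_image_add_eq htrans, fun hint hC_ne_univ ↦ ?_⟩
  obtain ⟨f, hf_surj, hf_ker⟩ :=
    exists_surjective_linearMap_ker_eq_span finrank_euclideanSpace_fin ht
  have hf_open : IsOpenMap f := f.isOpenMap_of_finiteDimensional hf_surj
  have hCJ : f ⁻¹' (f '' C) = C := preimage_image_eq_of_ker_le_span f hf_ker.le
    (hconv.add_smul_mem_iff_of_image_add_eq htrans)
  have hJ_closed : IsClosed (f '' C) :=
    (hf_open.isQuotientMap f.continuous_of_finiteDimensional hf_surj).isClosed_preimage.mp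
      (hCJ.symm ▸ hcl)
  have hJ_int : (interior (f '' C)).Nonempty :=
    (hint.image f).mono (hf_open.image_interior_subset C)
  have hJ_ne_univ : f '' C ≠ univ := fun h ↦ hC_ne_univ (by rw [← hCJ, h, preimage_univ])
  have hf0 : f ≠ 0 := fun h ↦ by simpa [h] using hf_surj 1
  have hft : f t = 0 := LinearMap.mem_ker.mp (hf_ker ▸ Submodule.mem_span_singleton_self t)
  rcases (hconv.linear_image f).ordConnected.eq_Iic_or_eq_Ici_or_eq_Icc hJ_closed hJ_int
      hJ_ne_univ with ⟨c, hc⟩ | ⟨c, hc⟩ | ⟨a, b, hab, habJ⟩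
  · exact .inl ⟨f, c, hf0, hft, by rw [← hCJ, hc]; rfl⟩
  · refine .inl ⟨-f, -c, neg_ne_zero.mpr hf0, by simp [hft], ?_⟩
    rw [← hCJ, hc]
    ext x
    simp
  · exact .inr ⟨f, a, b, hf0, hft, hab, by rw [← hCJ, habJ]; rfl⟩

/-- **Translation-invariant closed convex planar sets.** If `C ⊆ ℝ²` is nonempty, closed
and convex and `C + t = C` for some nonzero vector `t`, then `C + r • t = C` for every
real `r`; consequently, if moreover `C` has nonempty interior and `C ≠ ℝ²`, then `C` is a
closed half-plane whose boundary line is parallel to `t`, or a closed strip bounded by two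
distinct parallel lines each parallel to `t`. -/
theorem translation_invariant_closed_convex (C : Set Plane) (hne : C.Nonempty)
    (hcl : IsClosed C) (hconv : Convex ℝ C) (t : Plane) (ht : t ≠ 0)
    (htrans : (fun x => x + t) '' C = C) :
    (∀ r : ℝ, (fun x => x + r • t) '' C = C) ∧
    ((interior C).Nonempty → C ≠ Set.univ →
      IsClosedHalfPlaneDir C t ∨ IsClosedStripDir C t) :=
  translation_invariant_closed_convex_general C hcl hconv t ht htrans
end
end

section
/- In the triangular lattice graph E, for all vertices u, v ∈ ℤ × ℤ, writing (a,b) = u − v, the graph distance satisfies: dist_E(u,v) = max(|a|,|b|) if a·b ≥ 0, and dist_E(u,v) = |a| + |b| if a·b < 0. -/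
/-- The triangular lattice graph `E`: vertex set `ℤ × ℤ`, with `u` and `v` adjacent
iff `u - v ∈ {(1,0), (-1,0), (0,1), (0,-1), (1,1), (-1,-1)}`. -/
def triLattice : SimpleGraph (ℤ × ℤ) where
  Adj u v := (u - v) ∈ ({(1,0), (-1,0), (0,1), (0,-1), (1,1), (-1,-1)} : Set (ℤ × ℤ))
  symm := by
    constructor
    intro u v h
    simp only [Set.mem_insert_iff, Set.mem_singleton_iff, Prod.ext_iff, Prod.fst_sub,
      Prod.snd_sub] at h ⊢
    omega
  loopless := by
    constructor
    intro u h
    simp only [Set.mem_insert_iff, Set.mem_singleton_iff, Prod.ext_iff, Prod.fst_sub,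
      Prod.snd_sub] at h
    omega


/-!
Put `N (a, b) = max (max |a| |b|) |a - b|`. The six neighbour directions are exactly the vectors
with `N = 1`, and `N` is subadditive, so `N (u - v)` is a lower bound for the length of every walk
from `u` to `v`. Conversely, from any nonzero vector one of the six directions lowers `N` by one,
which gives a walk of length `N (u - v)`. Finally `|a - b| ≤ max |a| |b|` when `a` and `b` have the
same sign, while `|a - b| = |a| + |b|` when they do not.
-/

namespace SimpleGraph

variable {V : Type*} (G : SimpleGraph V) (d : V → V → ℕ)

theorem le_length_of_adj_lipschitz (h_self : ∀ v, d v v = 0)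
    (h_lip : ∀ u v w, G.Adj u v → d u w ≤ d v w + 1) {u w : V} (p : G.Walk u w) :
    d u w ≤ p.length := by
  induction p with
  | nil => simp [h_self]
  | cons hadj _ ih =>
    rw [Walk.length_cons]
    exact (h_lip _ _ _ hadj).trans (Nat.add_le_add_right ih 1)

theorem exists_walk_length_eq_of_descent (h_zero : ∀ u w, d u w = 0 → u = w)
    (h_desc : ∀ u w n, d u w = n + 1 → ∃ v, G.Adj u v ∧ d v w = n) (u w : V) :
    ∃ p : G.Walk u w, p.length = d u w := by
  induction hn : d u w generalizing u with
  | zero => obtain rfl := h_zero u w hn; exact ⟨.nil, rfl⟩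
  | succ n ih =>
    obtain ⟨v, hadj, hv⟩ := h_desc u w n hn
    obtain ⟨p, hp⟩ := ih v hv
    exact ⟨.cons hadj p, by rw [Walk.length_cons, hp]⟩

theorem dist_eq_of_adj_lipschitz_of_descent (h_zero : ∀ u w, d u w = 0 ↔ u = w)
    (h_lip : ∀ u v w, G.Adj u v → d u w ≤ d v w + 1)
    (h_desc : ∀ u w n, d u w = n + 1 → ∃ v, G.Adj u v ∧ d v w = n) (u w : V) :
    G.dist u w = d u w := by
  obtain ⟨p, hp⟩ := G.exists_walk_length_eq_of_descent d (fun u w ↦ (h_zero u w).1) h_desc u w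
  obtain ⟨q, hq⟩ := p.reachable.exists_walk_length_eq_dist
  refine le_antisymm (hp ▸ G.dist_le p) ?_
  exact hq ▸ G.le_length_of_adj_lipschitz d (fun v ↦ (h_zero v v).2 rfl) h_lip q

end SimpleGraph

def hexNorm (p : ℤ × ℤ) : ℕ := max (max p.1.natAbs p.2.natAbs) (p.1 - p.2).natAbs

theorem hexNorm_eq_zero_iff (p : ℤ × ℤ) : hexNorm p = 0 ↔ p = 0 := by
  simp only [hexNorm, Prod.ext_iff, Prod.fst_zero, Prod.snd_zero]
  omega

theorem hexNorm_add_le (p q : ℤ × ℤ) : hexNorm (p + q) ≤ hexNorm p + hexNorm q := by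
  obtain ⟨a, b⟩ := p
  obtain ⟨c, d⟩ := q
  have hdiff := Int.natAbs_add_le (a - b) (c - d)
  rw [sub_add_sub_comm] at hdiff
  simp only [hexNorm, Prod.mk_add_mk]
  refine max_le (max_le ((Int.natAbs_add_le a c).trans ?_) ((Int.natAbs_add_le b d).trans ?_))
    (hdiff.trans ?_) <;> gcongr <;> simp

theorem hexNorm_eq_one_iff (p : ℤ × ℤ) :
    hexNorm p = 1 ↔ p ∈ ({(1,0), (-1,0), (0,1), (0,-1), (1,1), (-1,-1)} : Set (ℤ × ℤ)) := by
  obtain ⟨a, b⟩ := p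
  simp only [hexNorm, Set.mem_insert_iff, Set.mem_singleton_iff, Prod.mk.injEq]
  omega

theorem triLattice_adj_iff_hexNorm_eq_one (u v : ℤ × ℤ) :
    triLattice.Adj u v ↔ hexNorm (u - v) = 1 :=
  (hexNorm_eq_one_iff (u - v)).symm

theorem hexNorm_exists_sub_eq (p : ℤ × ℤ) (n : ℕ) (h : hexNorm p = n + 1) :
    ∃ s, hexNorm s = 1 ∧ hexNorm (p - s) = n := by
  obtain ⟨a, b⟩ := p
  -- step along the first coordinate, diagonally when `b` has the same sign as `a`
  refine ⟨if 0 < a then (1, if 0 < b then 1 else 0)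
    else if a < 0 then (-1, if b < 0 then -1 else 0) else (0, if 0 < b then 1 else -1), ?_⟩
  simp only [hexNorm] at h
  split_ifs <;> simp only [hexNorm, Prod.mk_sub_mk] <;> omega

theorem hexNorm_of_mul_nonneg {a b : ℤ} (hab : 0 ≤ a * b) :
    (hexNorm (a, b) : ℤ) = max |a| |b| := by
  simp only [hexNorm, Nat.cast_max, Int.natCast_natAbs]
  rcases mul_nonneg_iff.mp hab with ⟨ha, hb⟩ | ⟨ha, hb⟩ <;>
    simp only [abs_eq_max_neg] <;> omega

theorem hexNorm_of_mul_neg {a b : ℤ} (hab : a * b < 0) :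
    (hexNorm (a, b) : ℤ) = |a| + |b| := by
  simp only [hexNorm, Nat.cast_max, Int.natCast_natAbs]
  rcases mul_neg_iff.mp hab with ⟨ha, hb⟩ | ⟨ha, hb⟩ <;>
    simp only [abs_eq_max_neg] <;> omega

theorem triLattice_dist_eq_hexNorm (u v : ℤ × ℤ) : triLattice.dist u v = hexNorm (u - v) := by
  refine triLattice.dist_eq_of_adj_lipschitz_of_descent (fun u v ↦ hexNorm (u - v))
    (fun u v ↦ by rw [hexNorm_eq_zero_iff, sub_eq_zero]) (fun u v w huv ↦ ?_)
    (fun u w n h ↦ ?_) u v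
  · rw [triLattice_adj_iff_hexNorm_eq_one] at huv
    have := hexNorm_add_le (u - v) (v - w)
    rwa [sub_add_sub_cancel, huv, add_comm] at this
  · obtain ⟨s, hs, hps⟩ := hexNorm_exists_sub_eq _ n h
    refine ⟨u - s, by simpa [triLattice_adj_iff_hexNorm_eq_one] using hs, ?_⟩
    rwa [sub_right_comm]

/-- **Distance in the triangular lattice.** For vertices `u, v` of the triangular lattice
graph `E`, writing `(a, b) = u - v`, the graph distance is `max |a| |b|` when `a*b ≥ 0`
and `|a| + |b|` when `a*b < 0`. -/
theorem triLattice_dist (u v : ℤ × ℤ) (a b : ℤ) (h : (a, b) = u - v) :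
    (a * b ≥ 0 → (triLattice.dist u v : ℤ) = max |a| |b|) ∧
    (a * b < 0 → (triLattice.dist u v : ℤ) = |a| + |b|) := by
  rw [triLattice_dist_eq_hexNorm, ← h]
  exact ⟨hexNorm_of_mul_nonneg, hexNorm_of_mul_neg⟩
end

section
/- In the triangular lattice graph E, let a ≥ b ≥ 0 be integers. A vertex (x,y) ∈ ℤ × ℤ lies on some geodesic from (0,0) to (a,b), i.e. satisfies dist_E((0,0),(x,y)) + dist_E((x,y),(a,b)) = dist_E((0,0),(a,b)), if and only if 0 ≤ y ≤ b and y ≤ x ≤ a − b + y. In other words, the interval between (0,0) and (a,b) in E is the (possibly degenerate) parallelogram with corners (0,0), (a−b,0), (a,b) and (b,b). -/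
/-! The graph distance of the triangular lattice is the hexagonal norm
`max |x| |y| |x - y|` of the displacement: a step changes that norm by at most one, and from
every vertex other than the target some step decreases it. Both distances in
`dist(0, p) + dist(p, (a, b))` dominate the first coordinate of their displacement, and these
coordinates add up to `a = dist(0, (a, b))`; so `p` is between the endpoints iff both bounds are
attained, which happens exactly on the parallelogram. -/

namespace triLattice

/-- The norm on `ℤ × ℤ` whose unit sphere is the hexagon of neighbours of the origin. -/
def hexNorm (p : ℤ × ℤ) : ℕ :=
  max p.1.natAbs (max p.2.natAbs (p.1 - p.2).natAbs)

lemma adj_iff {u v : ℤ × ℤ} :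
    triLattice.Adj u v ↔
      (u.1 - v.1 = 1 ∧ u.2 - v.2 = 0) ∨ (u.1 - v.1 = -1 ∧ u.2 - v.2 = 0) ∨
      (u.1 - v.1 = 0 ∧ u.2 - v.2 = 1) ∨ (u.1 - v.1 = 0 ∧ u.2 - v.2 = -1) ∨
      (u.1 - v.1 = 1 ∧ u.2 - v.2 = 1) ∨ (u.1 - v.1 = -1 ∧ u.2 - v.2 = -1) := by
  show u - v ∈ _ ↔ _
  simp only [Set.mem_insert_iff, Set.mem_singleton_iff, Prod.ext_iff, Prod.fst_sub,
    Prod.snd_sub]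

lemma adj_add_left_iff {u p q : ℤ × ℤ} :
    triLattice.Adj (u + p) (u + q) ↔ triLattice.Adj p q := by
  simp only [adj_iff, Prod.fst_add, Prod.snd_add, add_sub_add_left_eq_sub]

lemma hexNorm_add_le (p q : ℤ × ℤ) : hexNorm (p + q) ≤ hexNorm p + hexNorm q := by
  have h : (p + q).1 - (p + q).2 = (p.1 - p.2) + (q.1 - q.2) := by
    simp only [Prod.fst_add, Prod.snd_add]; ring
  rw [hexNorm, h, Prod.fst_add, Prod.snd_add]
  refine max_le ?_ (max_le ?_ ?_) <;>
    exact (Int.natAbs_add_le _ _).trans (add_le_add (by simp [hexNorm]) (by simp [hexNorm]))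

lemma hexNorm_sub_eq_one_of_adj {u w : ℤ × ℤ} (h : triLattice.Adj u w) :
    hexNorm (w - u) = 1 := by
  rw [adj_iff] at h
  simp only [hexNorm, Prod.fst_sub, Prod.snd_sub]
  omega

lemma hexNorm_sub_le_of_adj {u w : ℤ × ℤ} (h : triLattice.Adj u w) (v : ℤ × ℤ) :
    hexNorm (v - u) ≤ hexNorm (v - w) + 1 :=
  calc hexNorm (v - u) = hexNorm ((v - w) + (w - u)) := by rw [sub_add_sub_cancel]
    _ ≤ hexNorm (v - w) + hexNorm (w - u) := hexNorm_add_le _ _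
    _ = hexNorm (v - w) + 1 := by rw [hexNorm_sub_eq_one_of_adj h]

lemma exists_adj_zero_hexNorm_sub_succ {d : ℤ × ℤ} (hd : d ≠ 0) :
    ∃ s, triLattice.Adj 0 s ∧ hexNorm (d - s) + 1 = hexNorm d := by
  obtain ⟨d₁, d₂⟩ := d
  simp only [adj_iff, hexNorm, Prod.fst_sub, Prod.snd_sub, Prod.fst_zero, Prod.snd_zero,
    Prod.exists, ne_eq, Prod.mk_eq_zero] at hd ⊢
  -- move diagonally when the coordinates have the same sign, along an axis otherwise
  rcases lt_trichotomy d₁ 0 with h₁ | rfl | h₁ <;>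
    rcases lt_trichotomy d₂ 0 with h₂ | rfl | h₂
  · exact ⟨-1, -1, by omega⟩
  · exact ⟨-1, 0, by omega⟩
  · exact ⟨-1, 0, by omega⟩
  · exact ⟨0, -1, by omega⟩
  · exact absurd ⟨rfl, rfl⟩ hd
  · exact ⟨0, 1, by omega⟩
  · exact ⟨1, 0, by omega⟩
  · exact ⟨1, 0, by omega⟩
  · exact ⟨1, 1, by omega⟩

lemma exists_adj_hexNorm_sub_succ {u v : ℤ × ℤ} (h : u ≠ v) :
    ∃ w, triLattice.Adj u w ∧ hexNorm (v - w) + 1 = hexNorm (v - u) := by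
  obtain ⟨s, hs, hnorm⟩ := exists_adj_zero_hexNorm_sub_succ (sub_ne_zero.2 h.symm)
  refine ⟨u + s, by simpa using adj_add_left_iff.2 hs, ?_⟩
  rwa [sub_add_eq_sub_sub]

lemma hexNorm_sub_le_length {u v : ℤ × ℤ} (p : triLattice.Walk u v) :
    hexNorm (v - u) ≤ p.length := by
  induction p with
  | nil => simp [hexNorm]
  | cons h _ ih =>
    rw [SimpleGraph.Walk.length_cons]
    exact (hexNorm_sub_le_of_adj h _).trans (by omega)

lemma exists_walk_length_eq_hexNorm_sub (u v : ℤ × ℤ) :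
    ∃ p : triLattice.Walk u v, p.length = hexNorm (v - u) := by
  induction hn : hexNorm (v - u) generalizing u with
  | zero =>
    obtain rfl : u = v := by
      simp only [hexNorm, Nat.max_eq_zero_iff, Int.natAbs_eq_zero, Prod.fst_sub,
        Prod.snd_sub] at hn
      ext <;> omega
    exact ⟨.nil, rfl⟩
  | succ n ih =>
    have huv : u ≠ v := by rintro rfl; simp [hexNorm] at hn
    obtain ⟨w, hadj, hw⟩ := exists_adj_hexNorm_sub_succ huv
    obtain ⟨p, hp⟩ := ih w (by omega)
    exact ⟨.cons hadj p, by simp [hp]⟩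

theorem dist_eq_hexNorm_sub (u v : ℤ × ℤ) : triLattice.dist u v = hexNorm (v - u) := by
  obtain ⟨p, hp⟩ := exists_walk_length_eq_hexNorm_sub u v
  obtain ⟨q, hq⟩ := SimpleGraph.Reachable.exists_walk_length_eq_dist ⟨p⟩
  exact le_antisymm (hp ▸ SimpleGraph.dist_le p) (hq ▸ hexNorm_sub_le_length q)

lemma fst_le_hexNorm (p : ℤ × ℤ) : p.1 ≤ hexNorm p := by
  simp only [hexNorm]
  omega

lemma hexNorm_eq_fst_iff {p : ℤ × ℤ} :
    (hexNorm p : ℤ) = p.1 ↔ 0 ≤ p.2 ∧ p.2 ≤ p.1 := by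
  simp only [hexNorm]
  omega

end triLattice

/-- **Intervals in the triangular lattice are parallelograms.** For integers `a ≥ b ≥ 0`,
a vertex `(x, y)` lies on some geodesic from `(0,0)` to `(a,b)` in the triangular lattice
graph `E` (i.e. `dist((0,0),(x,y)) + dist((x,y),(a,b)) = dist((0,0),(a,b))`) iff
`0 ≤ y ≤ b` and `y ≤ x ≤ a - b + y`: the interval is the parallelogram with corners
`(0,0)`, `(a-b,0)`, `(a,b)` and `(b,b)`. -/
theorem triLattice_interval (a b : ℤ) (hb : 0 ≤ b) (hab : b ≤ a) (x y : ℤ) :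
    triLattice.dist (0, 0) (x, y) + triLattice.dist (x, y) (a, b) =
      triLattice.dist (0, 0) (a, b) ↔
    (0 ≤ y ∧ y ≤ b ∧ y ≤ x ∧ x ≤ a - b + y) := by
  simp only [triLattice.dist_eq_hexNorm_sub, sub_zero, Prod.mk_sub_mk]
  have hab' : (triLattice.hexNorm (a, b) : ℤ) = a := triLattice.hexNorm_eq_fst_iff.2 ⟨hb, hab⟩
  have h₁ := triLattice.fst_le_hexNorm (x, y)
  have h₂ := triLattice.fst_le_hexNorm (a - x, b - y)
  have bounds_attained_iff : (triLattice.hexNorm (x, y) : ℤ) = x ∧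
      (triLattice.hexNorm (a - x, b - y) : ℤ) = a - x ↔
      0 ≤ y ∧ y ≤ b ∧ y ≤ x ∧ x ≤ a - b + y := by
    rw [triLattice.hexNorm_eq_fst_iff, triLattice.hexNorm_eq_fst_iff]
    dsimp only
    omega
  rw [← bounds_attained_iff]
  omega
end

section
/- The Euclidean plane is not quasi-isometrically embeddable in the real line: there do not exist a map f : ℝ² → ℝ and constants λ > 0 and δ ≥ 0 such that for all x, y ∈ ℝ², both |f(x) − f(y)| ≤ λ·dist(x,y) + δ and dist(x,y) ≤ λ·|f(x) − f(y)| + δ hold, where dist denotes the Euclidean distance on ℝ². -/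
/-!
A quasi-isometric embedding `f : ℝⁿ → ℝ` with constants `λ, δ` maps a `(δ + 1)`-separated set
to a `1/λ`-separated set, and the ball of radius `r` into an interval of length `2(λr + δ)`.
The grid of mesh `δ + 1` with `Nⁿ` points lies in a ball of radius `O(N)`, so pigeonholing
its images into that interval forces `Nⁿ = O(N)`, which fails for `n ≥ 2` and `N` large.
-/

def IsQuasiIsometricEmbedding {X Y : Type*} [PseudoMetricSpace X] [PseudoMetricSpace Y]
    (f : X → Y) (lam δ : ℝ) : Prop :=
  ∀ x y, dist (f x) (f y) ≤ lam * dist x y + δ ∧ dist x y ≤ lam * dist (f x) (f y) + δ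

theorem card_le_of_pairwise_le_abs_sub {ι : Type*} [Fintype ι] {φ : ι → ℝ} {c R ε : ℝ}
    (hε : 0 < ε) (hsep : Pairwise fun i j => ε ≤ |φ i - φ j|) (hφ : ∀ i, |φ i - c| ≤ R) :
    Fintype.card ι ≤ ⌊2 * R / ε⌋₊ + 1 := by
  -- `k i` is the index of the length-`ε` bucket of `[c - R, c + R]` containing `φ i`.
  set k : ι → ℕ := fun i => ⌊(φ i - (c - R)) / ε⌋₊
  have hnonneg : ∀ i, 0 ≤ (φ i - (c - R)) / ε := fun i =>
    div_nonneg (by linarith [(abs_le.1 (hφ i)).1]) hε.le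
  have hk_lt : ∀ i, k i < ⌊2 * R / ε⌋₊ + 1 := fun i =>
    Nat.lt_succ_of_le <| Nat.floor_mono <|
      div_le_div_of_nonneg_right (by linarith [(abs_le.1 (hφ i)).2]) hε.le
  have hk_inj : Function.Injective k := by
    intro i j hij
    by_contra hne
    have hfloor : ⌊(φ i - (c - R)) / ε⌋ = ⌊(φ j - (c - R)) / ε⌋ := by
      rw [← Int.natCast_floor_eq_floor (hnonneg i), ← Int.natCast_floor_eq_floor (hnonneg j)]
      exact congrArg _ hij
    have hlt := Int.abs_sub_lt_one_of_floor_eq_floor hfloor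
    rw [← sub_div, sub_sub_sub_cancel_right, abs_div, abs_of_pos hε, div_lt_one hε] at hlt
    exact (hsep hne).not_gt hlt
  simpa using Fintype.card_le_of_injective (fun i => (⟨k i, hk_lt i⟩ : Fin _))
    fun i j hij => hk_inj (congrArg Fin.val hij)

namespace IsQuasiIsometricEmbedding

variable {X : Type*} [PseudoMetricSpace X] {lam δ : ℝ}

theorem const_nonneg {Y : Type*} [PseudoMetricSpace Y] {f : X → Y}
    (hf : IsQuasiIsometricEmbedding f lam δ) (x : X) : 0 ≤ δ := by
  simpa using (hf x x).2

theorem card_le {f : X → ℝ} (hf : IsQuasiIsometricEmbedding f lam δ) (hlam : 0 < lam)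
    {s r : ℝ} (hs : δ < s) {ι : Type*} [Fintype ι] {g : ι → X} (x₀ : X)
    (hsep : Pairwise fun i j => s ≤ dist (g i) (g j)) (hr : ∀ i, dist (g i) x₀ ≤ r) :
    Fintype.card ι ≤ ⌊2 * (lam * r + δ) / ((s - δ) / lam)⌋₊ + 1 := by
  refine card_le_of_pairwise_le_abs_sub (φ := f ∘ g) (c := f x₀) (div_pos (sub_pos.2 hs) hlam)
    (fun i j hij => ?_) (fun i => ?_)
  · show (s - δ) / lam ≤ |f (g i) - f (g j)|
    rw [div_le_iff₀ hlam, mul_comm, ← Real.dist_eq]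
    linarith [hsep hij, (hf (g i) (g j)).2]
  · show |f (g i) - f x₀| ≤ _
    rw [← Real.dist_eq]
    nlinarith [hr i, (hf (g i) x₀).1]

end IsQuasiIsometricEmbedding

noncomputable def scaledGrid (n N : ℕ) (s : ℝ) (p : Fin n → Fin N) : EuclideanSpace ℝ (Fin n) :=
  WithLp.toLp 2 fun i => s * p i

section scaledGrid

variable {n N : ℕ} {s : ℝ}

theorem scaledGrid_pairwise_le_dist (hs : 0 ≤ s) :
    Pairwise fun p q => s ≤ dist (scaledGrid n N s p) (scaledGrid n N s q) := by
  intro p q hpq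
  obtain ⟨i, hi⟩ := Function.ne_iff.1 hpq
  have hone : (1 : ℝ) ≤ |((p i : ℕ) : ℝ) - (q i : ℕ)| := by
    have : (1 : ℤ) ≤ |((p i : ℕ) : ℤ) - (q i : ℕ)| :=
      Int.one_le_abs (sub_ne_zero.2 (by exact_mod_cast Fin.val_injective.ne hi))
    exact_mod_cast this
  calc s ≤ s * |((p i : ℕ) : ℝ) - (q i : ℕ)| := le_mul_of_one_le_right hs hone
    _ = dist (scaledGrid n N s p i) (scaledGrid n N s q i) := by
      simp [scaledGrid, Real.dist_eq, ← mul_sub, abs_mul, abs_of_nonneg hs]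
    _ ≤ dist (scaledGrid n N s p) (scaledGrid n N s q) := PiLp.dist_apply_le _ _ i

theorem norm_scaledGrid_le (hs : 0 ≤ s) (p : Fin n → Fin N) :
    ‖scaledGrid n N s p‖ ≤ √n * (s * N) := by
  have hcoord : ∀ i, ‖scaledGrid n N s p i‖ ≤ s * N := fun i => by
    simpa [scaledGrid, abs_of_nonneg hs] using
      mul_le_mul_of_nonneg_left (by exact_mod_cast (p i).isLt.le : ((p i : ℕ) : ℝ) ≤ N) hs
  rw [EuclideanSpace.norm_eq, Real.sqrt_le_left (by positivity), mul_pow, Real.sq_sqrt n.cast_nonneg]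
  calc ∑ i, ‖scaledGrid n N s p i‖ ^ 2 ≤ ∑ _i : Fin n, (s * N) ^ 2 :=
        Finset.sum_le_sum fun i _ => pow_le_pow_left₀ (norm_nonneg _) (hcoord i) 2
    _ = n * (s * N) ^ 2 := by simp

end scaledGrid

theorem not_isQuasiIsometricEmbedding_euclideanSpace_real {n : ℕ} (hn : 2 ≤ n)
    (f : EuclideanSpace ℝ (Fin n) → ℝ) {lam δ : ℝ} (hlam : 0 < lam) :
    ¬ IsQuasiIsometricEmbedding f lam δ := by
  intro hf
  have hδ : 0 ≤ δ := hf.const_nonneg 0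
  have hs : 0 ≤ δ + 1 := by linarith
  set A := 2 * lam ^ 2 * √n * (δ + 1)
  set B := 2 * lam * δ + 1
  have hgrid (N : ℕ) : (N : ℝ) ^ n ≤ A * N + B := by
    have hcard := hf.card_le hlam (lt_add_one δ) (g := scaledGrid n N (δ + 1)) 0
      (scaledGrid_pairwise_le_dist hs) fun p => (dist_zero_right _).trans_le (norm_scaledGrid_le hs p)
    rw [Fintype.card_fun, Fintype.card_fin, Fintype.card_fin, add_sub_cancel_left] at hcard
    calc (N : ℝ) ^ n ≤ ⌊2 * (lam * (√n * ((δ + 1) * N)) + δ) / (1 / lam)⌋₊ + 1 := by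
          exact_mod_cast hcard
      _ ≤ 2 * (lam * (√n * ((δ + 1) * N)) + δ) / (1 / lam) + 1 := by
          gcongr; exact Nat.floor_le (by positivity)
      _ = A * N + B := by field_simp; ring
  obtain ⟨N, hN⟩ := exists_nat_gt (A + B)
  have hN1 : (1 : ℝ) ≤ N := by linarith [show 0 ≤ A by positivity, show 0 ≤ lam * δ by positivity]
  have hsq : (N : ℝ) ^ 2 ≤ N ^ n := pow_le_pow_right₀ hN1 hn
  nlinarith [hgrid N, show 0 ≤ B by positivity]

/-- **The Euclidean plane is not quasi-isometrically embeddable in the real line.**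
There is no map `f : ℝ² → ℝ` together with constants `λ > 0` and `δ ≥ 0` such that for
all `x, y ∈ ℝ²` both `|f x - f y| ≤ λ * dist x y + δ` and
`dist x y ≤ λ * |f x - f y| + δ`. -/
theorem no_quasiIsometric_embedding_plane_into_line :
    ¬ ∃ (f : EuclideanSpace ℝ (Fin 2) → ℝ) (lam δ : ℝ), 0 < lam ∧ 0 ≤ δ ∧
      ∀ x y : EuclideanSpace ℝ (Fin 2),
        |f x - f y| ≤ lam * dist x y + δ ∧ dist x y ≤ lam * |f x - f y| + δ := by
  rintro ⟨f, lam, δ, hlam, -, hf⟩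
  exact not_isQuasiIsometricEmbedding_euclideanSpace_real le_rfl f hlam fun x y => by
    simpa only [Real.dist_eq] using hf x y
end
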